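/- Let U be uniform on (0,1), γ ∈ (0,1), C^γ = {U ≤ γ}, P^γ(A) = P(A)/γ for A ⊆ C^γ measurable. Let X satisfy properties (iii)-(iv) above, Z = X restricted to C^γ, and f nondecreasing and left-continuous. Then for all α ∈ (0,1), VaR^α_{P^γ}(f(Z)) = VaR^{αγ}_P(f(X)), and moreover lim_{α↑1} VaR^α_{P^γ}(f(Z)) = q(γ) where q(γ) = f(F⁻¹_{μ₁}(γ),…,F⁻¹_{μₙ}(γ)). -/

import Mathlib

/-!
Write `B = {U ≤ γ}`, `g = f ∘ X` and `q = f(F⁻¹_{μ₁}(γ), …, F⁻¹_{μₙ}(γ))`. Off `B` each `Xᵢ` is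
its quantile at `U > γ`, so `g ≥ q` there, while on `B` almost surely every `Xᵢ ≤ F⁻¹_{μᵢ}(γ)`,
so `g ≤ q`. Hence for `a < q` the tail `P(g > a)` equals `γ P^γ(g > a) + (1 - γ)`, and for
`a ≥ q` both tail conditions in the two VaR infima hold; the two infima run over the same set.

For the limit, `VaR^α_{P^γ}(g) ≤ q` always, and for `a < q` left-continuity of `f` gives
`y < F⁻¹(γ)` componentwise with `f(y) > a`. By independence under `P^γ`,
`P^γ(g > a) ≥ ∏ᵢ P^γ(Xᵢ ≥ yᵢ)`, and each factor is positive because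
`P(Xᵢ ≥ yᵢ) > 1 - γ = P(Bᶜ)`. So `VaR^α_{P^γ}(g) ≥ a` once `1 - α < P^γ(g > a)`.
-/

open MeasureTheory

/-- Left-continuous quantile function `F⁻¹_μ(u) = inf {a : F_μ(a) ≥ u}`. -/
noncomputable def qf (μ : Measure ℝ) (u : ℝ) : ℝ :=
  sInf {a : ℝ | u ≤ (μ (Set.Iic a)).toReal}

/-- Value at risk at level `α`: `VaR^α(Z) = inf {a : Q(Z > a) ≤ 1 − α}`. -/
noncomputable def VaR {Ω : Type*} [MeasurableSpace Ω] (Q : Measure Ω)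
    (Z : Ω → ℝ) (α : ℝ) : ℝ :=
  sInf {a : ℝ | (Q {ω | a < Z ω}).toReal ≤ 1 - α}

open Set Filter Topology ProbabilityTheory

section Quantile

variable {μ : Measure ℝ} [IsProbabilityMeasure μ]

lemma toReal_measure_Iic_eq_cdf (a : ℝ) : (μ (Iic a)).toReal = cdf μ a := by
  rw [cdf_eq_real, measureReal_def]

lemma bddBelow_setOf_le_measure_Iic {u : ℝ} (hu : 0 < u) :
    BddBelow {a : ℝ | u ≤ (μ (Iic a)).toReal} := by
  obtain ⟨b, hb⟩ := ((tendsto_cdf_atBot μ).eventually_lt_const hu).exists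
  refine ⟨b, fun a ha => le_of_not_gt fun hab => ?_⟩
  rw [mem_ofPred_eq, toReal_measure_Iic_eq_cdf] at ha
  linarith [monotone_cdf μ hab.le]

lemma nonempty_setOf_le_measure_Iic {u : ℝ} (hu : u < 1) :
    {a : ℝ | u ≤ (μ (Iic a)).toReal}.Nonempty := by
  obtain ⟨b, hb⟩ := ((tendsto_cdf_atTop μ).eventually_const_lt hu).exists
  exact ⟨b, by rw [mem_ofPred_eq, toReal_measure_Iic_eq_cdf]; exact hb.le⟩

lemma qf_monotoneOn : MonotoneOn (qf μ) (Ioo 0 1) := fun _ hu _ hu' huu' =>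
  csInf_le_csInf (bddBelow_setOf_le_measure_Iic hu.1) (nonempty_setOf_le_measure_Iic hu'.2)
    fun _ ha => huu'.trans ha

lemma one_sub_lt_measureReal_Ioi_of_lt_qf {u y : ℝ} (hu : 0 < u) (hy : y < qf μ u) :
    1 - u < μ.real (Ioi y) := by
  have hIic : μ.real (Iic y) < u :=
    lt_of_not_ge fun h => hy.not_ge (csInf_le (bddBelow_setOf_le_measure_Iic hu) h)
  rw [← compl_Iic, probReal_compl_eq_one_sub measurableSet_Iic]
  linarith

end Quantile

section Uniform

variable {Ω : Type*} [MeasurableSpace Ω] {P : Measure Ω} {U : Ω → ℝ}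

lemma measure_le_eq_ofReal_of_map_eq_uniform (hU : Measurable U)
    (hUunif : P.map U = volume.restrict (Ioo 0 1)) {γ : ℝ} (hγ : γ ≤ 1) :
    P {ω | U ω ≤ γ} = ENNReal.ofReal γ := by
  change P (U ⁻¹' Iic γ) = _
  rw [← Measure.map_apply hU measurableSet_Iic, hUunif,
    Measure.restrict_congr_set Ioo_ae_eq_Ioc, Measure.restrict_apply measurableSet_Iic,
    Iic_inter_Ioc_of_le hγ, Real.volume_Ioc, sub_zero]

lemma ae_mem_Ioo_of_map_eq_uniform (hU : Measurable U)
    (hUunif : P.map U = volume.restrict (Ioo 0 1)) : ∀ᵐ ω ∂P, U ω ∈ Ioo 0 1 :=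
  ae_of_ae_map hU.aemeasurable (hUunif ▸ ae_restrict_mem measurableSet_Ioo)

end Uniform

lemma exists_forall_lt_and_lt_apply {ι β : Type*} [LinearOrder β] [TopologicalSpace β]
    [OrderTopology β] {f : (ι → ℝ) → β} {x : ι → ℝ}
    (hf : Tendsto f (𝓝[{y | ∀ i, y i < x i}] x) (𝓝 (f x))) {a : β} (ha : a < f x) :
    ∃ y, (∀ i, y i < x i) ∧ a < f y := by
  have hx : x ∈ closure {y : ι → ℝ | ∀ i, y i < x i} := by
    rw [show {y : ι → ℝ | ∀ i, y i < x i} = univ.pi fun i => Iio (x i) by ext; simp,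
      closure_pi_set]
    simp [closure_Iio]
  have := mem_closure_iff_nhdsWithin_neBot.1 hx
  obtain ⟨y, hay, hy⟩ := ((hf.eventually (eventually_gt_nhds ha)).and self_mem_nhdsWithin).exists
  exact ⟨y, hy, hay⟩

lemma setOf_lt_apply_subset_iUnion {ι Ω : Type*} {f : (ι → ℝ) → ℝ} (hf : Monotone f)
    (x : ι → ℝ) (X : ι → Ω → ℝ) :
    {ω | f x < f (fun i => X i ω)} ⊆ ⋃ i, {ω | x i < X i ω} := by
  intro ω hω
  by_contra h
  simp only [mem_iUnion, mem_ofPred_eq, not_exists, not_lt] at h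
  exact hω.not_ge (hf h)

section Conditional

variable {Ω : Type*} [MeasurableSpace Ω]

lemma cond_ne_zero_of_measureReal_compl_lt {P : Measure Ω} [IsFiniteMeasure P] {A B : Set Ω}
    (hB : MeasurableSet B) (h : P.real Bᶜ < P.real A) : P[A|B] ≠ 0 := by
  refine (cond_pos_of_inter_ne_zero hB fun h0 => h.not_ge ?_).ne'
  rw [← measureReal_inter_add_sdiff hB (s := A), inter_comm, (measureReal_eq_zero_iff).2 h0,
    zero_add]
  exact measureReal_mono fun ω hω => hω.2

lemma cond_preimage_Ici_ne_zero_of_lt_qf {P : Measure Ω} [IsProbabilityMeasure P] {B : Set Ω}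
    (hB : MeasurableSet B) (hPB : 0 < P.real B) {Y : Ω → ℝ} (hY : Measurable Y)
    {ν : Measure ℝ} [IsProbabilityMeasure ν] (hYd : P.map Y = ν) {y : ℝ}
    (hy : y < qf ν (P.real B)) : P[Y ⁻¹' Ici y | B] ≠ 0 := by
  refine cond_ne_zero_of_measureReal_compl_lt hB ?_
  calc P.real Bᶜ = 1 - P.real B := probReal_compl_eq_one_sub hB
    _ < ν.real (Ioi y) := one_sub_lt_measureReal_Ioi_of_lt_qf hPB hy
    _ ≤ ν.real (Ici y) := measureReal_mono Ioi_subset_Ici_self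
    _ = P.real (Y ⁻¹' Ici y) := by rw [← hYd, map_measureReal_apply hY measurableSet_Ici]

lemma ProbabilityTheory.iIndepFun.measure_lt_comp_ne_zero {ι : Type*} [Fintype ι] {Q : Measure Ω}
    {X : ι → Ω → ℝ} (hX : iIndepFun X Q) {f : (ι → ℝ) → ℝ} (hf : Monotone f) {x : ι → ℝ}
    (hlc : Tendsto f (𝓝[{y | ∀ i, y i < x i}] x) (𝓝 (f x)))
    (hX_pos : ∀ i, ∀ y < x i, Q (X i ⁻¹' Ici y) ≠ 0) {a : ℝ} (ha : a < f x) :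
    Q {ω | a < f (fun i => X i ω)} ≠ 0 := by
  obtain ⟨y, hyx, hay⟩ := exists_forall_lt_and_lt_apply hlc ha
  have hsub : (⋂ i, X i ⁻¹' Ici (y i)) ⊆ {ω | a < f (fun i => X i ω)} := fun ω hω =>
    hay.trans_le (hf fun i => mem_iInter.1 hω i)
  refine fun h0 => ?_
  have hprod := hX.meas_iInter fun i => ⟨Ici (y i), measurableSet_Ici, rfl⟩
  rw [measure_mono_null hsub h0] at hprod
  exact Finset.prod_ne_zero_iff.2 (fun i _ => hX_pos i (y i) (hyx i)) hprod.symm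

variable {g : Ω → ℝ} {q : ℝ}

lemma VaR_mem_Icc (Q : Measure Ω) [IsFiniteMeasure Q] {a α : ℝ}
    (hnull : Q {ω | q < g ω} = 0) (hα : α ≤ 1) (ha : 1 - α < Q.real {ω | a < g ω}) :
    VaR Q g α ∈ Icc a q := by
  have hq : q ∈ {b : ℝ | (Q {ω | b < g ω}).toReal ≤ 1 - α} := by
    simp [hnull, hα]
  have hlb : a ∈ lowerBounds {b : ℝ | (Q {ω | b < g ω}).toReal ≤ 1 - α} := fun b hb =>
    le_of_not_gt fun hba => ha.not_ge <|
      (measureReal_mono fun ω hω => hba.trans hω).trans hb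
  exact ⟨le_csInf ⟨q, hq⟩ hlb, csInf_le ⟨a, hlb⟩ hq⟩

lemma tendsto_VaR_nhdsLT_one (Q : Measure Ω) [IsFiniteMeasure Q]
    (hnull : Q {ω | q < g ω} = 0) (hpos : ∀ a < q, Q {ω | a < g ω} ≠ 0) :
    Tendsto (VaR Q g) (𝓝[<] 1) (𝓝 q) := by
  have hIcc : ∀ a < q, ∀ᶠ α in 𝓝[<] 1, VaR Q g α ∈ Icc a q := by
    intro a ha
    have hδ : 0 < Q.real {ω | a < g ω} :=
      measureReal_nonneg.lt_of_ne' ((measureReal_ne_zero_iff).2 (hpos a ha))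
    filter_upwards [Ioo_mem_nhdsLT (show 1 - Q.real {ω | a < g ω} < 1 by linarith)] with α hα
    exact VaR_mem_Icc Q hnull hα.2.le (by linarith [hα.1])
  refine tendsto_order.2 ⟨fun a' ha' => ?_, fun b hb => ?_⟩
  · obtain ⟨a, ha'a, haq⟩ := exists_between ha'
    exact (hIcc a haq).mono fun α h => ha'a.trans_le h.1
  · exact (hIcc (q - 1) (by linarith)).mono fun α h => h.2.trans_lt hb

lemma VaR_cond_eq_VaR_mul_measureReal (P : Measure Ω) [IsProbabilityMeasure P] {B : Set Ω}
    (hB : MeasurableSet B) (hPB : P B ≠ 0) (hnull : P ({ω | q < g ω} ∩ B) = 0)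
    (hcover : ∀ a < q, ∀ᵐ ω ∂P, ω ∉ B → a < g ω) {α : ℝ} (hα : α ≤ 1) :
    VaR P[|B] g α = VaR P g (α * P.real B) := by
  have hp : 0 < P.real B := measureReal_nonneg.lt_of_ne' ((measureReal_ne_zero_iff).2 hPB)
  unfold VaR
  congr 1
  ext a
  simp only [mem_ofPred_eq, ← measureReal_def]
  set A := {ω | a < g ω}
  have hcond : P[|B].real A = (P.real B)⁻¹ * P.real (A ∩ B) := by
    rw [measureReal_def, cond_apply hB, inter_comm, ENNReal.toReal_mul, ENNReal.toReal_inv]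
    rfl
  rw [hcond, ← measureReal_inter_add_sdiff hB (s := A)]
  rcases lt_or_ge a q with ha | ha
  · have hAB : P.real (A \ B) = 1 - P.real B := by
      rw [← probReal_compl_eq_one_sub hB]
      refine measureReal_congr ?_
      filter_upwards [hcover a ha] with ω hω
      exact propext ⟨fun h => h.2, fun h => ⟨hω h, h⟩⟩
    rw [hAB, inv_mul_le_iff₀ hp]
    constructor <;> intro h <;> linarith
  · have hAB : P.real (A ∩ B) = 0 :=
      (measureReal_eq_zero_iff).2 (measure_mono_null (inter_subset_inter_left B
        fun ω hω => ha.trans_lt hω) hnull)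
    have hAB' : P.real (A \ B) ≤ 1 - P.real B := by
      rw [← probReal_compl_eq_one_sub hB]
      exact measureReal_mono fun ω hω => hω.2
    rw [hAB]
    exact iff_of_true (by simpa using hα) (by nlinarith)

end Conditional

/-- For the conditional measure `P^γ = γ⁻¹ P(· ∩ {U ≤ γ})`:
`VaR^α_{P^γ}(f(Z)) = VaR^{αγ}_P(f(X))` for all `α ∈ (0,1)`, and
`lim_{α↑1} VaR^α_{P^γ}(f(Z)) = q(γ)`. -/
theorem VaR_conditional {Ω : Type*} [MeasurableSpace Ω] (P : Measure Ω)
    [IsProbabilityMeasure P]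
    (n : ℕ) (U : Ω → ℝ) (hU : Measurable U)
    (hUunif : P.map U = volume.restrict (Set.Ioo (0 : ℝ) 1))
    (γ : ℝ) (hγ : γ ∈ Set.Ioo (0 : ℝ) 1)
    (μ : Fin n → ProbabilityMeasure ℝ) (X : Fin n → Ω → ℝ)
    (hXm : ∀ i, Measurable (X i))
    (hXd : ∀ i, P.map (X i) = (μ i).toMeasure)
    (hindep : ProbabilityTheory.iIndepFun X
      ((ENNReal.ofReal γ)⁻¹ • P.restrict {ω | U ω ≤ γ}))
    (h0 : ∀ i, P ({ω | qf (μ i).toMeasure γ < X i ω} ∩ {ω | U ω ≤ γ}) = 0)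
    (hagree : ∀ i ω, γ < U ω → X i ω = qf (μ i).toMeasure (U ω))
    (f : (Fin n → ℝ) → ℝ) (hf : Monotone f)
    (hlc : ∀ x : Fin n → ℝ,
      Filter.Tendsto f (nhdsWithin x {y | ∀ i, y i < x i}) (nhds (f x))) :
    (∀ α ∈ Set.Ioo (0 : ℝ) 1,
      VaR ((ENNReal.ofReal γ)⁻¹ • P.restrict {ω | U ω ≤ γ})
          (fun ω => f (fun i => X i ω)) α
        = VaR P (fun ω => f (fun i => X i ω)) (α * γ)) ∧
    Filter.Tendsto
      (fun α => VaR ((ENNReal.ofReal γ)⁻¹ • P.restrict {ω | U ω ≤ γ})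
        (fun ω => f (fun i => X i ω)) α)
      (nhdsWithin 1 (Set.Iio 1))
      (nhds (f (fun i => qf (μ i).toMeasure γ))) := by
  obtain ⟨hγ0, hγ1⟩ := hγ
  set B := {ω | U ω ≤ γ}
  set g := fun ω => f (fun i => X i ω)
  set x := fun i => qf (μ i).toMeasure γ
  have hB : MeasurableSet B := hU measurableSet_Iic
  have hPB : P B = ENNReal.ofReal γ := measure_le_eq_ofReal_of_map_eq_uniform hU hUunif hγ1.le
  have hPB' : P.real B = γ := by rw [measureReal_def, hPB, ENNReal.toReal_ofReal hγ0.le]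
  have hQ : (ENNReal.ofReal γ)⁻¹ • P.restrict B = P[|B] := by rw [ProbabilityTheory.cond, hPB]
  have hnull : P ({ω | f x < g ω} ∩ B) = 0 :=
    measure_mono_null (inter_subset_inter_left B (setOf_lt_apply_subset_iUnion hf x X))
      (by rw [iUnion_inter]; exact measure_iUnion_null h0)
  have hcover : ∀ a < f x, ∀ᵐ ω ∂P, ω ∉ B → a < g ω := by
    intro a ha
    filter_upwards [ae_mem_Ioo_of_map_eq_uniform hU hUunif] with ω hω hωB
    have hγU : γ < U ω := not_le.1 hωB
    refine ha.trans_le (hf fun i => ?_)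
    rw [hagree i ω hγU]
    exact qf_monotoneOn ⟨hγ0, hγ1⟩ hω hγU.le
  have hcoord : ∀ i, ∀ y < x i, P[X i ⁻¹' Ici y | B] ≠ 0 := fun i y hy =>
    cond_preimage_Ici_ne_zero_of_lt_qf hB (by rwa [hPB']) (hXm i) (hXd i) (by rwa [hPB'])
  rw [hQ] at hindep ⊢
  refine ⟨fun α hα => ?_, tendsto_VaR_nhdsLT_one P[|B] ?_ ?_⟩
  · rw [VaR_cond_eq_VaR_mul_measureReal P hB (by simp [hPB, hγ0]) hnull hcover hα.2.le, hPB']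
  · rw [cond_apply hB, inter_comm, hnull, mul_zero]
  · exact fun a ha => hindep.measure_lt_comp_ne_zero hf (hlc x) hcoord ha
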